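/- arXiv:1302.0586 — 4 statements merged into one kernel-verified Lean document; each statement's English description precedes it below -/
import Mathlib

section
/- Let p ≥ 2 and let π_p = 2π(p-1)^{1/p}/(p sin(π/p)). Define sin_p : [0, π_p/2] → [0, (p-1)^{1/p}] implicitly by ∫_0^{sin_p t} ds/(1 - s^p/(p-1))^{1/p} = t. Then I_p := ∫_0^{π_p/2} sin_p(t) dt = ((p-1)^{2/p}/p) · B(2/p, 1 - 1/p), where B(r,s) = ∫_0^1 t^{r-1}(1-t)^{s-1} dt is the Beta function. -/
open MeasureTheory intervalIntegral Set

/-!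
The integrand `g s = (1 - s ^ p / (p - 1)) ^ (-1/p)` is continuous on `[0, c)`, `c = (p - 1) ^ (1/p)`,
so `F x = ∫₀ˣ g` has derivative `g` on `(0, c)`; since `F ∘ sin_p = id` and `sin_p` is a bijection,
`F` is the inverse bijection `[0, c] → [0, π_p/2]`. The substitution `t = F x` turns
`∫₀^{π_p/2} sin_p` into `∫₀^c x g x dx`, and `u = x ^ p / (p - 1)` turns that into the Beta integral.
Both substitutions are made on the open interval `(0, c)`, whose image misses only the endpoints, so
no integrability of `g` near its singularity at `c` is needed.
-/

theorem Set.BijOn.invOn_of_leftInvOn {α β : Type*} {f : α → β} {g : β → α} {s : Set α}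
    {t : Set β} (hf : BijOn f s t) (h : LeftInvOn g f s) : InvOn g f s t :=
  ⟨h, hf.image_eq ▸ h.rightInvOn_image⟩

section VectorValued

variable {E : Type*} [NormedAddCommGroup E] [NormedSpace ℝ E]

theorem hasDerivAt_integral_of_continuousOn_Ico [CompleteSpace E] {f : ℝ → E} {a b x : ℝ}
    (hf : ContinuousOn f (Ico a b)) (hx : x ∈ Ioo a b) :
    HasDerivAt (fun u => ∫ t in a..u, f t) (f x) x := by
  have hIoo : ContinuousOn f (Ioo a b) := hf.mono Ioo_subset_Ico_self
  refine integral_hasDerivAt_right ?_ (hIoo.stronglyMeasurableAtFilter isOpen_Ioo x hx)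
    (hIoo.continuousAt (Ioo_mem_nhds hx.1 hx.2))
  refine (hf.mono ?_).intervalIntegrable
  rw [uIcc_of_le hx.1.le]
  exact Icc_subset_Ico_right hx.2

theorem intervalIntegral_eq_setIntegral_Ioo_of_bijOn {F F' : ℝ → ℝ} {a b a' b' : ℝ} (hab : a ≤ b)
    (hF : BijOn F (Icc a b) (Icc a' b')) (hF' : ∀ x ∈ Ioo a b, HasDerivAt F (F' x) x)
    (f : ℝ → E) :
    ∫ y in a'..b', f y = ∫ x in Ioo a b, |F' x| • f (F x) := by
  have ha'b' : a' ≤ b' := nonempty_Icc.1 (hF.image_eq ▸ (nonempty_Icc.2 hab).image F)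
  have himage : F '' Ioo a b =ᵐ[volume] Icc a' b' := by
    rw [← Icc_sdiff_both, hF.injOn.image_sdiff, hF.image_eq]
    exact sdiff_null_ae_eq_self (((toFinite _).image F).measure_zero _)
  rw [integral_of_le ha'b', ← integral_Icc_eq_integral_Ioc, ← setIntegral_congr_set himage,
    integral_image_eq_integral_abs_deriv_smul measurableSet_Ioo
      (fun x hx => (hF' x hx).hasDerivWithinAt) (hF.injOn.mono Ioo_subset_Icc_self)]

end VectorValued

section PSine

variable {p : ℝ}

theorem one_sub_rpow_div_pos (hp : 1 < p) {s : ℝ} (hs : 0 ≤ s)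
    (hsc : s < (p - 1) ^ ((1:ℝ)/p)) : 0 < 1 - s ^ p / (p - 1) := by
  rw [one_div, Real.lt_rpow_inv_iff_of_pos hs (by linarith) (by linarith)] at hsc
  rw [sub_pos, div_lt_one (by linarith)]
  exact hsc

theorem continuousOn_psine_integrand (hp : 1 < p) :
    ContinuousOn (fun s : ℝ => (1 - s ^ p / (p - 1)) ^ (-(1/p))) (Ico 0 ((p - 1) ^ ((1:ℝ)/p))) := by
  refine ContinuousOn.rpow_const (ContinuousOn.sub continuousOn_const
    (ContinuousOn.div_const (fun s _ => ?_) _)) fun s hs => Or.inl ?_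
  · exact (Real.continuousAt_rpow_const s p (Or.inr (by linarith))).continuousWithinAt
  · exact (one_sub_rpow_div_pos hp hs.1 hs.2).ne'

theorem bijOn_rpow_div_sub_one (hp : 1 < p) :
    BijOn (fun x : ℝ => x ^ p / (p - 1)) (Icc 0 ((p - 1) ^ ((1:ℝ)/p))) (Icc 0 1) := by
  have hp0 : p ≠ 0 := by positivity
  have hq : 0 < p - 1 := by linarith
  simp only [one_div]
  refine InvOn.bijOn (f' := fun u => ((p - 1) * u) ^ p⁻¹) ⟨fun x hx => ?_, fun u hu => ?_⟩
    (fun x hx => ⟨by have := hx.1; positivity, ?_⟩) (fun u hu => ⟨by have := hu.1; positivity, ?_⟩)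
  · simp only [mul_div_cancel₀ _ hq.ne', Real.rpow_rpow_inv hx.1 hp0]
  · simp only [Real.rpow_inv_rpow (mul_nonneg hq.le hu.1) hp0, mul_div_cancel_left₀ _ hq.ne']
  · rw [div_le_one hq, ← Real.le_rpow_inv_iff_of_pos hx.1 hq.le (by linarith)]
    exact hx.2
  · exact Real.rpow_le_rpow (by have := hu.1; positivity) (mul_le_of_le_one_right hq.le hu.2)
      (by positivity)

theorem beta_substitution_factor (hp : 1 < p) {x : ℝ} (hx : 0 < x) :
    (p - 1) ^ ((2:ℝ)/p) / p * (p * x ^ (p - 1) / (p - 1) * (x ^ p / (p - 1)) ^ ((2:ℝ)/p - 1))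
      = x := by
  have hq : 0 < p - 1 := by linarith
  have hexp : p * (2 / p - 1) = 2 - p := by field_simp
  have hx1 : x ^ (p - 1) * x ^ (2 - p) = x := by
    rw [← Real.rpow_add hx]
    norm_num
  rw [Real.div_rpow (by positivity) hq.le, ← Real.rpow_mul hx.le, hexp, Real.rpow_sub_one hq.ne']
  have : 0 < (p - 1) ^ ((2:ℝ)/p) := by positivity
  field_simp
  exact hx1

theorem setIntegral_Ioo_mul_psine_integrand (hp : 1 < p) :
    ∫ x in Ioo 0 ((p - 1) ^ ((1:ℝ)/p)), x * (1 - x ^ p / (p - 1)) ^ (-(1/p))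
      = (p - 1) ^ ((2:ℝ)/p) / p *
        ∫ t in (0:ℝ)..1, t ^ ((2:ℝ)/p - 1) * (1 - t) ^ ((1 - 1/p) - 1) := by
  rw [intervalIntegral_eq_setIntegral_Ioo_of_bijOn (by positivity) (bijOn_rpow_div_sub_one hp)
      (fun x hx => (Real.hasDerivAt_rpow_const (Or.inl hx.1.ne')).div_const _),
    ← MeasureTheory.integral_const_mul]
  refine setIntegral_congr_fun measurableSet_Ioo fun x hx => ?_
  have hx0 : 0 < x := hx.1
  have hq : 0 < p - 1 := by linarith
  rw [smul_eq_mul, abs_of_pos (by positivity), sub_sub_cancel_left]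
  linear_combination -(1 - x ^ p / (p - 1)) ^ (-(1/p)) * beta_substitution_factor hp hx0

end PSine

theorem stmt_0_general (p : ℝ) (hp : 2 ≤ p)
    (πp : ℝ)
    (sinp : ℝ → ℝ)
    (hsinp : ∀ t ∈ Set.Icc (0:ℝ) (πp/2),
      ∫ s in (0:ℝ)..(sinp t), (1 - s ^ p / (p - 1)) ^ (-(1/p)) = t)
    (hbij : Set.BijOn sinp (Set.Icc (0:ℝ) (πp/2)) (Set.Icc (0:ℝ) ((p - 1) ^ ((1:ℝ)/p)))) :
    ∫ t in (0:ℝ)..(πp/2), sinp t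
      = ((p - 1) ^ ((2:ℝ)/p) / p) *
        ∫ t in (0:ℝ)..1, t ^ ((2:ℝ)/p - 1) * (1 - t) ^ ((1 - 1/p) - 1) := by
  have hp1 : 1 < p := by linarith
  set c := (p - 1) ^ ((1:ℝ)/p)
  set F : ℝ → ℝ := fun x => ∫ s in (0:ℝ)..x, (1 - s ^ p / (p - 1)) ^ (-(1/p))
  have hinv : InvOn F sinp (Icc 0 (πp/2)) (Icc 0 c) := hbij.invOn_of_leftInvOn hsinp
  have hF : BijOn F (Icc 0 c) (Icc 0 (πp/2)) := hbij.symm hinv.symm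
  rw [← setIntegral_Ioo_mul_psine_integrand hp1,
    intervalIntegral_eq_setIntegral_Ioo_of_bijOn (by positivity) hF
      (fun x hx => hasDerivAt_integral_of_continuousOn_Ico (continuousOn_psine_integrand hp1) hx)]
  refine setIntegral_congr_fun measurableSet_Ioo fun x hx => ?_
  rw [hinv.2 (Ioo_subset_Icc_self hx), smul_eq_mul, mul_comm, abs_of_nonneg
    (Real.rpow_nonneg (one_sub_rpow_div_pos hp1 hx.1.le hx.2).le _)]

/-- the integral of the p-sine over a quarter period equals
`((p-1)^(2/p)/p) * B(2/p, 1 - 1/p)`. -/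
theorem stmt_0 (p : ℝ) (hp : 2 ≤ p)
    (πp : ℝ) (hπp : πp = 2 * Real.pi * (p - 1) ^ ((1:ℝ)/p) / (p * Real.sin (Real.pi / p)))
    (sinp : ℝ → ℝ)
    (hsinp : ∀ t ∈ Set.Icc (0:ℝ) (πp/2),
      ∫ s in (0:ℝ)..(sinp t), (1 - s ^ p / (p - 1)) ^ (-(1/p)) = t)
    (hbij : Set.BijOn sinp (Set.Icc (0:ℝ) (πp/2)) (Set.Icc (0:ℝ) ((p - 1) ^ ((1:ℝ)/p)))) :
    ∫ t in (0:ℝ)..(πp/2), sinp t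
      = ((p - 1) ^ ((2:ℝ)/p) / p) *
        ∫ t in (0:ℝ)..1, t ^ ((2:ℝ)/p - 1) * (1 - t) ^ ((1 - 1/p) - 1) :=
  stmt_0_general p hp πp sinp hsinp hbij
end

section
/- Let f satisfy |x^k f^{(k)}(x)| ≤ c|x|^γ for 0 ≤ k ≤ 6 and all x ≠ 0, with 0 < γ < 1/(p-1), p ≥ 2. Let v : ℝ → ℝ be C¹ and bounded, d > 0 a constant, and F(x) = ∫_0^x f. Then for r sufficiently large and any θ with v(θ) ≠ 0, the function r ↦ F(d^{1/p} r^{1/p} v(θ)) satisfies |∂_r^k F(d^{1/p} r^{1/p} v(θ))| ≤ C r^{-k + (γ+1)/p} for 0 ≤ k ≤ 6, for some constant C independent of r and θ. -/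
open MeasureTheory intervalIntegral

/-! Put `x = a s^α`. The operator `s d/ds` acts on functions of `x` as `α x d/dx`, and `x d/dx`
sends `E_j(x) = x^{j+1} f^{(j)}(x)` to `E_{j+1}(x) + (j+1) E_j(x)`. Hence, for `k ≥ 1`,
`s^k ∂_s^k F(a s^α)` is a combination of the `E_j(a s^α)`, `j < k`, with coefficients depending
only on `α` and `k`. The hypothesis on `f` bounds every `E_j(x)`, and also `F(x)`, by a multiple of
`|x|^{γ+1} = |a|^{γ+1} s^{α(γ+1)}`. -/

noncomputable def eulerTerm (f : ℝ → ℝ) (j : ℕ) (x : ℝ) : ℝ := x ^ (j + 1) * iteratedDeriv j f x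

theorem hasDerivAt_iteratedDeriv_of_contDiffOn {f : ℝ → ℝ} {n j : ℕ} {s : Set ℝ}
    (hf : ContDiffOn ℝ n f s) (hs : IsOpen s) (hj : j < n) {x : ℝ} (hx : x ∈ s) :
    HasDerivAt (iteratedDeriv j f) (iteratedDeriv (j + 1) f x) x := by
  have hdiff : DifferentiableAt ℝ (iteratedDerivWithin j f s) x :=
    (hf.differentiableOn_iteratedDerivWithin (by exact_mod_cast hj) hs.uniqueDiffOn x hx
      ).differentiableAt (hs.mem_nhds hx)
  rw [iteratedDeriv_succ]
  have heq : iteratedDerivWithin j f s =ᶠ[nhds x] iteratedDeriv j f :=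
    Filter.eventuallyEq_of_mem (hs.mem_nhds hx) (iteratedDerivWithin_of_isOpen hs)
  exact (hdiff.congr_of_eventuallyEq heq.symm).hasDerivAt

theorem hasDerivAt_eulerTerm {f : ℝ → ℝ} {n j : ℕ} (hf : ContDiffOn ℝ n f {0}ᶜ) (hj : j < n)
    {x : ℝ} (hx : x ≠ 0) :
    HasDerivAt (eulerTerm f j) ((eulerTerm f (j + 1) x + (j + 1) * eulerTerm f j x) / x) x := by
  refine ((hasDerivAt_pow (j + 1) x).mul
    (hasDerivAt_iteratedDeriv_of_contDiffOn hf isOpen_compl_singleton hj hx)).congr_deriv ?_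
  simp only [eulerTerm, Nat.add_sub_cancel]
  field_simp
  push_cast
  ring

theorem hasDerivAt_const_mul_rpow (a α : ℝ) {s : ℝ} (hs : 0 < s) :
    HasDerivAt (fun t => a * t ^ α) (α * (a * s ^ α) / s) s := by
  refine ((Real.hasDerivAt_rpow_const (p := α) (Or.inl hs.ne')).const_mul a).congr_deriv ?_
  rw [Real.rpow_sub hs, Real.rpow_one]
  ring

theorem hasDerivAt_inv_pow (m : ℕ) {s : ℝ} (hs : s ≠ 0) :
    HasDerivAt (fun t => (t ^ m)⁻¹) (-m * (s ^ (m + 1))⁻¹) s := by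
  refine ((hasDerivAt_pow m s).inv (pow_ne_zero m hs)).congr_deriv ?_
  rcases m with _ | m
  · simp
  · field_simp
    simp only [Nat.add_sub_cancel]
    ring

theorem hasDerivAt_eulerTerm_comp_div_pow {f : ℝ → ℝ} {n j : ℕ} (hf : ContDiffOn ℝ n f {0}ᶜ)
    (hj : j < n) {a : ℝ} (ha : a ≠ 0) (α : ℝ) (m : ℕ) {s : ℝ} (hs : 0 < s) :
    HasDerivAt (fun t => eulerTerm f j (a * t ^ α) / t ^ m)
      (α * (eulerTerm f (j + 1) (a * s ^ α) / s ^ (m + 1))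
        + (α * (j + 1) - m) * (eulerTerm f j (a * s ^ α) / s ^ (m + 1))) s := by
  have hx : a * s ^ α ≠ 0 := mul_ne_zero ha (Real.rpow_pos_of_pos hs α).ne'
  refine (((hasDerivAt_eulerTerm hf hj hx).comp s (hasDerivAt_const_mul_rpow a α hs)).mul
    (hasDerivAt_inv_pow m hs.ne')).congr_deriv ?_
  simp only [Function.comp_apply]
  field_simp
  ring

theorem hasDerivAt_primitive_comp {f : ℝ → ℝ} (hf : Continuous f) (a α : ℝ) {s : ℝ}
    (hs : 0 < s) :
    HasDerivAt (fun t => ∫ u in (0:ℝ)..a * t ^ α, f u) (α * (eulerTerm f 0 (a * s ^ α) / s)) s := by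
  refine ((hf.integral_hasStrictDerivAt 0 _).hasDerivAt.comp s
    (hasDerivAt_const_mul_rpow a α hs)).congr_deriv ?_
  simp only [eulerTerm, iteratedDeriv_zero]
  ring

theorem sum_mul_add_eq_sum_cons_snoc {k : ℕ} (c : Fin (k + 1) → ℝ) (u : ℕ → ℝ) (α : ℝ)
    (β : ℕ → ℝ) :
    ∑ j : Fin (k + 1), c j * (α * u (j + 1) + β j * u j)
      = ∑ i : Fin (k + 2), (α * (Fin.cons 0 c : Fin (k + 2) → ℝ) i
          + β i * (Fin.snoc c 0 : Fin (k + 2) → ℝ) i) * u i := by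
  simp only [add_mul, mul_add, Finset.sum_add_distrib]
  congr 1
  · conv_rhs => rw [Fin.sum_univ_succ]
    simp only [Fin.cons_zero, Fin.cons_succ, Fin.val_succ, mul_zero, zero_mul, zero_add]
    exact Finset.sum_congr rfl fun j _ => by ring
  · conv_rhs => rw [Fin.sum_univ_castSucc]
    simp only [Fin.snoc_castSucc, Fin.snoc_last, Fin.val_castSucc, mul_zero, zero_mul, add_zero]
    exact Finset.sum_congr rfl fun j _ => by ring

theorem exists_iteratedDeriv_succ_primitive_comp_eq {f : ℝ → ℝ} (hfc : Continuous f) (α : ℝ)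
    {k : ℕ} (hf : ContDiffOn ℝ k f {0}ᶜ) :
    ∃ c : Fin (k + 1) → ℝ, ∀ a ≠ 0, ∀ s > 0,
      iteratedDeriv (k + 1) (fun t => ∫ u in (0:ℝ)..a * t ^ α, f u) s
        = ∑ j : Fin (k + 1), c j * (eulerTerm f j (a * s ^ α) / s ^ (k + 1)) := by
  induction k with
  | zero =>
    refine ⟨fun _ => α, fun a _ s hs => ?_⟩
    simp [(hasDerivAt_primitive_comp hfc a α hs).deriv]
  | succ k ih =>
    obtain ⟨c, hc⟩ := ih (hf.of_le (by norm_cast; omega))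
    refine ⟨fun i => α * (Fin.cons 0 c : Fin (k + 2) → ℝ) i
      + (α * (i + 1) - (k + 1 : ℕ)) * (Fin.snoc c 0 : Fin (k + 2) → ℝ) i, fun a ha s hs => ?_⟩
    have hrep : iteratedDeriv (k + 1) (fun t => ∫ u in (0:ℝ)..a * t ^ α, f u)
        =ᶠ[nhds s] fun t => ∑ j, c j * (eulerTerm f j (a * t ^ α) / t ^ (k + 1)) :=
      Filter.eventuallyEq_of_mem (Ioi_mem_nhds hs) fun t ht => hc a ha t ht
    have hderiv := HasDerivAt.fun_sum (u := Finset.univ) fun j _ =>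
      (hasDerivAt_eulerTerm_comp_div_pow hf j.isLt ha α (k + 1) hs).const_mul (c j)
    rw [iteratedDeriv_succ, hrep.deriv_eq, hderiv.deriv, sum_mul_add_eq_sum_cons_snoc c
      (fun j => eulerTerm f j (a * s ^ α) / s ^ (k + 2)) α (fun j => α * (j + 1) - (k + 1 : ℕ))]

theorem abs_eulerTerm_le {f : ℝ → ℝ} {c γ x : ℝ} {j : ℕ} (hx : x ≠ 0)
    (h : |x ^ j * iteratedDeriv j f x| ≤ c * |x| ^ γ) :
    |eulerTerm f j x| ≤ c * |x| ^ (γ + 1) := by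
  rw [eulerTerm, pow_succ', mul_assoc, abs_mul, Real.rpow_add_one (abs_ne_zero.2 hx)]
  calc |x| * |x ^ j * iteratedDeriv j f x| ≤ |x| * (c * |x| ^ γ) := by gcongr
    _ = c * (|x| ^ γ * |x|) := by ring

theorem abs_integral_le_of_abs_le_rpow {f : ℝ → ℝ} {c γ : ℝ} (hγ : 0 ≤ γ)
    (h : ∀ u ≠ 0, |f u| ≤ c * |u| ^ γ) (x : ℝ) :
    |∫ u in (0:ℝ)..x, f u| ≤ |c| * |x| ^ (γ + 1) := by
  have hf : ∀ᵐ u, u ∈ Set.uIoc 0 x → ‖f u‖ ≤ |c| * |x| ^ γ := by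
    filter_upwards [(Set.countable_singleton (0:ℝ)).ae_notMem volume] with u hu hux
    have hux : |u| ≤ |x| := by
      simpa using Set.abs_sub_left_of_mem_uIcc (Set.uIoc_subset_uIcc hux)
    calc ‖f u‖ ≤ c * |u| ^ γ := h u hu
      _ ≤ |c| * |u| ^ γ := by gcongr; exact le_abs_self c
      _ ≤ |c| * |x| ^ γ := by gcongr
  have := norm_integral_le_of_norm_le_const_ae hf
  rwa [Real.norm_eq_abs, sub_zero, mul_assoc, ← Real.rpow_add_one' (abs_nonneg x) (by positivity)]
    at this

theorem abs_mul_rpow_rpow_div_pow (a α β : ℝ) (k : ℕ) {s : ℝ} (hs : 0 < s) :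
    |a * s ^ α| ^ β / s ^ k = |a| ^ β * s ^ (α * β - k) := by
  rw [abs_mul, abs_of_pos (Real.rpow_pos_of_pos hs α), Real.mul_rpow (abs_nonneg a)
    (Real.rpow_nonneg hs.le α), ← Real.rpow_mul hs.le, Real.rpow_sub hs, Real.rpow_natCast,
    mul_div_assoc]

theorem exists_bound_iteratedDeriv_primitive_comp {f : ℝ → ℝ} {n : ℕ} {c γ : ℝ}
    (hfc : Continuous f) (hf : ContDiffOn ℝ n f {0}ᶜ) (hγ : 0 ≤ γ)
    (hbound : ∀ x : ℝ, x ≠ 0 → ∀ k : ℕ, k ≤ n → |x ^ k * iteratedDeriv k f x| ≤ c * |x| ^ γ)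
    (α : ℝ) {k : ℕ} (hk : k ≤ n) :
    ∃ B, ∀ a, ∀ s > 0, |iteratedDeriv k (fun t => ∫ u in (0:ℝ)..a * t ^ α, f u) s|
      ≤ B * (|a| ^ (γ + 1) * s ^ (α * (γ + 1) - k)) := by
  rcases k with _ | k
  · refine ⟨|c|, fun a s hs => ?_⟩
    have hf0 : ∀ u ≠ 0, |f u| ≤ c * |u| ^ γ := fun u hu => by
      simpa using hbound u hu 0 (Nat.zero_le n)
    rw [iteratedDeriv_zero, ← abs_mul_rpow_rpow_div_pow a α _ 0 hs, pow_zero, div_one]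
    exact abs_integral_le_of_abs_le_rpow hγ hf0 _
  obtain ⟨b, hb⟩ := exists_iteratedDeriv_succ_primitive_comp_eq hfc α
    (hf.of_le (by exact_mod_cast (Nat.le_succ k).trans hk))
  refine ⟨(∑ j, |b j|) * c, fun a s hs => ?_⟩
  rcases eq_or_ne a 0 with rfl | ha
  · simp [Real.zero_rpow (by positivity : γ + 1 ≠ 0)]
  have hterm : ∀ j : Fin (k + 1), |eulerTerm f j (a * s ^ α) / s ^ (k + 1)|
      ≤ c * (|a| ^ (γ + 1) * s ^ (α * (γ + 1) - (k + 1 : ℕ))) := fun j => by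
    have hx : a * s ^ α ≠ 0 := mul_ne_zero ha (Real.rpow_pos_of_pos hs α).ne'
    rw [← abs_mul_rpow_rpow_div_pow a α _ _ hs, abs_div, abs_of_pos (pow_pos hs _), mul_div_assoc']
    gcongr
    exact abs_eulerTerm_le hx (hbound _ hx j (by omega))
  rw [hb a ha s hs, mul_assoc, Finset.sum_mul]
  refine (Finset.abs_sum_le_sum_abs _ _).trans (Finset.sum_le_sum fun j _ => ?_)
  rw [abs_mul]
  gcongr
  exact hterm j

theorem exists_uniform_bound_iteratedDeriv_primitive_comp {f : ℝ → ℝ} {n : ℕ} {c γ : ℝ}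
    (hfc : Continuous f) (hf : ContDiffOn ℝ n f {0}ᶜ) (hγ : 0 ≤ γ)
    (hbound : ∀ x : ℝ, x ≠ 0 → ∀ k : ℕ, k ≤ n → |x ^ k * iteratedDeriv k f x| ≤ c * |x| ^ γ)
    (α : ℝ) :
    ∃ B ≥ 0, ∀ k ≤ n, ∀ a, ∀ s > 0,
      |iteratedDeriv k (fun t => ∫ u in (0:ℝ)..a * t ^ α, f u) s|
        ≤ B * (|a| ^ (γ + 1) * s ^ (α * (γ + 1) - k)) := by
  have hev : ∀ k ∈ Set.Iic n, ∀ᶠ B in Filter.atTop, ∀ a, ∀ s > 0,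
      |iteratedDeriv k (fun t => ∫ u in (0:ℝ)..a * t ^ α, f u) s|
        ≤ B * (|a| ^ (γ + 1) * s ^ (α * (γ + 1) - k)) := fun k hk => by
    obtain ⟨B, hB⟩ := exists_bound_iteratedDeriv_primitive_comp hfc hf hγ hbound α hk
    filter_upwards [Filter.eventually_ge_atTop B] with B' hB' a s hs
    exact (hB a s hs).trans (by gcongr)
  obtain ⟨B, hB0, hB⟩ := ((Filter.eventually_ge_atTop 0).and
    ((Filter.eventually_all_finite (Set.finite_Iic n)).2 hev)).exists
  exact ⟨B, hB0, fun k hk => hB k hk⟩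

theorem stmt_6_general (p γ c d : ℝ) (hγ0 : 0 < γ)
    (f : ℝ → ℝ) (hfC : Continuous f) (hfC6 : ContDiffOn ℝ 6 f {(0:ℝ)}ᶜ)
    (hbound : ∀ x : ℝ, x ≠ 0 → ∀ k : ℕ, k ≤ 6 →
      |x ^ k * iteratedDeriv k f x| ≤ c * |x| ^ γ)
    (v : ℝ → ℝ) (M : ℝ) (hvb : ∀ θ : ℝ, |v θ| ≤ M) :
    ∃ C r₀ : ℝ, 0 < C ∧ ∀ r ≥ r₀, ∀ θ : ℝ, v θ ≠ 0 → ∀ k : ℕ, k ≤ 6 →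
      |iteratedDeriv k
        (fun s : ℝ => ∫ u in (0:ℝ)..(d ^ ((1:ℝ)/p) * s ^ ((1:ℝ)/p) * v θ), f u) r|
        ≤ C * r ^ (-(k:ℝ) + (γ + 1) / p) := by
  obtain ⟨B, hB0, hB⟩ :=
    exists_uniform_bound_iteratedDeriv_primitive_comp hfC hfC6 hγ0.le hbound (1 / p)
  set A := |d ^ ((1:ℝ)/p) * M| ^ (γ + 1)
  refine ⟨B * A + 1, 1, by positivity, fun r hr θ _ k hk => ?_⟩
  have hr0 : 0 < r := one_pos.trans_le hr
  have hA : |d ^ ((1:ℝ)/p) * v θ| ^ (γ + 1) ≤ A := by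
    refine Real.rpow_le_rpow (abs_nonneg _) ?_ (by positivity)
    rw [abs_mul, abs_mul]
    exact mul_le_mul_of_nonneg_left ((hvb θ).trans (le_abs_self M)) (abs_nonneg _)
  have hfun : (fun s : ℝ => ∫ u in (0:ℝ)..(d ^ ((1:ℝ)/p) * s ^ ((1:ℝ)/p) * v θ), f u)
      = fun s => ∫ u in (0:ℝ)..(d ^ ((1:ℝ)/p) * v θ) * s ^ (1 / p), f u := by
    ext s
    ring_nf
  rw [hfun, show -(k:ℝ) + (γ + 1) / p = 1 / p * (γ + 1) - k by ring]
  calc _ ≤ B * (|d ^ ((1:ℝ)/p) * v θ| ^ (γ + 1) * r ^ (1 / p * (γ + 1) - k)) :=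
        hB k hk _ r hr0
    _ ≤ (B * A + 1) * r ^ (1 / p * (γ + 1) - k) := by
        rw [← mul_assoc]
        gcongr
        linarith [mul_le_mul_of_nonneg_left hA hB0]

/-- derivative estimates for `r ↦ F(d^{1/p} r^{1/p} v(θ))`. -/
theorem stmt_6 (p γ c d : ℝ) (hp : 2 ≤ p) (hγ0 : 0 < γ) (hγ1 : γ < 1 / (p - 1))
    (hc : 0 < c) (hd : 0 < d)
    (f : ℝ → ℝ) (hfC : Continuous f) (hfC6 : ContDiffOn ℝ 6 f {(0:ℝ)}ᶜ)
    (hbound : ∀ x : ℝ, x ≠ 0 → ∀ k : ℕ, k ≤ 6 →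
      |x ^ k * iteratedDeriv k f x| ≤ c * |x| ^ γ)
    (v : ℝ → ℝ) (hv : ContDiff ℝ 1 v) (M : ℝ) (hvb : ∀ θ : ℝ, |v θ| ≤ M) :
    ∃ C r₀ : ℝ, 0 < C ∧ ∀ r ≥ r₀, ∀ θ : ℝ, v θ ≠ 0 → ∀ k : ℕ, k ≤ 6 →
      |iteratedDeriv k
        (fun s : ℝ => ∫ u in (0:ℝ)..(d ^ ((1:ℝ)/p) * s ^ ((1:ℝ)/p) * v θ), f u) r|
        ≤ C * r ^ (-(k:ℝ) + (γ + 1) / p) :=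
  stmt_6_general p γ c d hγ0 f hfC hfC6 hbound v M hvb
end

section
/- Under the hypotheses of the previous statement, assume additionally x² f'(x) ≤ β₂|x|^{γ+1} for x ≠ 0, where p β₁ > q β₂ > 0 and 1/p + 1/q = 1. Then F̄''(h) ≤ ((β₂/(pβ₁)) − 1/q) h^{-1} F̄'(h) for large h, and hence F̄''(h) ≤ −c h^{-2+(γ+1)/p} for some c > 0 and all sufficiently large h. -/
/-!
Write `Φ x = x * f x`, `G t = ∫ θ in 0..2πp, Φ (t * v θ)` and `u h = (d h / ω)^(1/p)`,
so that `F̄' h = G (u h) / (p h)`. Pointwise `x Φ'(x) = x f + x² f' ≤ (1 + β₂/β₁) Φ(x)`;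
differentiating under the integral gives `t G'(t) ≤ (1 + β₂/β₁) G(t)`, and since
`h u'(h) = u(h) / p` the quotient rule turns this into
`F̄'' h ≤ ((1 + β₂/β₁)/p - 1) h⁻¹ F̄' h`, where `(1 + β₂/β₁)/p - 1 = β₂/(pβ₁) - 1/q < 0`.
The lower bound on `F̄'` then gives the decay.
-/

open MeasureTheory intervalIntegral

open Filter Topology

section IdMul

variable {f : ℝ → ℝ}

theorem hasDerivAt_id_mul_of_continuousAt_zero (hf : ContinuousAt f 0) :
    HasDerivAt (fun x => x * f x) (f 0) 0 := by
  rw [hasDerivAt_iff_tendsto_slope]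
  refine (hf.tendsto.mono_left nhdsWithin_le_nhds).congr' ?_
  filter_upwards [self_mem_nhdsWithin] with x (hx : x ≠ 0)
  rw [slope_def_field]
  field_simp
  ring

theorem hasDerivAt_id_mul (hf : Continuous f) (hfd : ∀ x ≠ 0, DifferentiableAt ℝ f x)
    (x : ℝ) : HasDerivAt (fun y => y * f y) (f x + x * deriv f x) x := by
  rcases eq_or_ne x 0 with rfl | hx
  · simpa using hasDerivAt_id_mul_of_continuousAt_zero hf.continuousAt
  · simpa using (hasDerivAt_id' x).fun_mul (hfd x hx).hasDerivAt

theorem continuous_add_id_mul_deriv (hf : Continuous f) (hf' : ContinuousOn (deriv f) {0}ᶜ)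
    (h0 : Tendsto (fun x => x * deriv f x) (𝓝[≠] 0) (𝓝 0)) :
    Continuous fun x => f x + x * deriv f x := by
  refine hf.add (continuous_iff_continuousAt.2 fun x => ?_)
  rcases eq_or_ne x 0 with rfl | hx
  · rw [← continuousWithinAt_compl_self, ContinuousWithinAt, zero_mul]
    exact h0
  · exact continuousAt_id.mul (hf'.continuousAt (isOpen_compl_singleton.mem_nhds hx))

theorem mul_add_mul_deriv_le {β₁ β₂ γ : ℝ} (hβ₁ : 0 < β₁) (hβ₂ : 0 ≤ β₂)
    (hfl : ∀ x ≠ 0, β₁ * |x| ^ (γ + 1) ≤ x * f x)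
    (hfu : ∀ x ≠ 0, x ^ 2 * deriv f x ≤ β₂ * |x| ^ (γ + 1)) (x : ℝ) :
    x * (f x + x * deriv f x) ≤ (1 + β₂ / β₁) * (x * f x) := by
  rcases eq_or_ne x 0 with rfl | hx
  · simp
  have hlow : β₂ * |x| ^ (γ + 1) ≤ β₂ / β₁ * (x * f x) :=
    calc β₂ * |x| ^ (γ + 1) = β₂ / β₁ * (β₁ * |x| ^ (γ + 1)) := by field_simp
      _ ≤ β₂ / β₁ * (x * f x) := mul_le_mul_of_nonneg_left (hfl x hx) (by positivity)
  linear_combination hfu x hx + hlow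

end IdMul

theorem tendsto_nhdsNE_zero_of_abs_le_rpow {g : ℝ → ℝ} {c γ : ℝ} (hγ : 0 < γ)
    (hg : ∀ x ≠ 0, |g x| ≤ c * |x| ^ γ) : Tendsto g (𝓝[≠] 0) (𝓝 0) := by
  have hbound : Tendsto (fun x : ℝ => c * |x| ^ γ) (𝓝[≠] 0) (𝓝 0) := by
    have : Continuous fun x : ℝ => c * |x| ^ γ := by fun_prop (disch := exact hγ.le)
    simpa [Real.zero_rpow hγ.ne'] using (this.tendsto 0).mono_left nhdsWithin_le_nhds
  refine squeeze_zero_norm' ?_ hbound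
  filter_upwards [self_mem_nhdsWithin] with x hx using hg x hx

section ParametricIntegral

variable {Φ Φ' v : ℝ → ℝ}

theorem hasDerivAt_intervalIntegral_comp_mul (hΦ : ∀ x, HasDerivAt Φ (Φ' x) x)
    (hΦ' : Continuous Φ') (hv : Continuous v) (a b t₀ : ℝ) :
    HasDerivAt (fun t => ∫ θ in a..b, Φ (t * v θ)) (∫ θ in a..b, Φ' (t₀ * v θ) * v θ) t₀ := by
  have hΦc : Continuous Φ := continuous_iff_continuousAt.2 fun x => (hΦ x).continuousAt
  have hF' : Continuous fun z : ℝ × ℝ => Φ' (z.1 * v z.2) * v z.2 := by fun_prop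
  obtain ⟨C, hC⟩ := ((isCompact_closedBall t₀ 1).prod
    (isCompact_uIcc (a := a) (b := b))).exists_bound_of_continuousOn hF'.continuousOn
  refine (intervalIntegral.hasDerivAt_integral_of_dominated_loc_of_deriv_le
    (bound := fun _ => C) (F' := fun t θ => Φ' (t * v θ) * v θ) (Metric.ball_mem_nhds t₀ one_pos)
    (.of_forall fun t => (by fun_prop : Continuous fun θ => Φ (t * v θ)).aestronglyMeasurable)
    ((by fun_prop : Continuous fun θ => Φ (t₀ * v θ)).intervalIntegrable _ _)
    (by fun_prop : Continuous fun θ => Φ' (t₀ * v θ) * v θ).aestronglyMeasurable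
    (.of_forall fun θ hθ t ht =>
      hC (t, θ) ⟨Metric.ball_subset_closedBall ht, Set.uIoc_subset_uIcc hθ⟩)
    intervalIntegrable_const (.of_forall fun θ _ t _ => ?_)).2
  exact (hΦ (t * v θ)).comp t (hasDerivAt_mul_const (v θ))

theorem mul_integral_comp_mul_le {a b κ : ℝ} (hab : a ≤ b) (hΦ : Continuous Φ)
    (hΦ' : Continuous Φ') (hv : Continuous v) (hle : ∀ x, x * Φ' x ≤ κ * Φ x) (t : ℝ) :
    t * ∫ θ in a..b, Φ' (t * v θ) * v θ ≤ κ * ∫ θ in a..b, Φ (t * v θ) := by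
  rw [← intervalIntegral.integral_const_mul, ← intervalIntegral.integral_const_mul]
  refine integral_mono_on hab
    ((by fun_prop : Continuous fun θ => t * (Φ' (t * v θ) * v θ)).intervalIntegrable _ _)
    ((by fun_prop : Continuous fun θ => κ * Φ (t * v θ)).intervalIntegrable _ _) fun θ _ => ?_
  calc t * (Φ' (t * v θ) * v θ) = t * v θ * Φ' (t * v θ) := by ring
    _ ≤ κ * Φ (t * v θ) := hle _

end ParametricIntegral

theorem hasDerivAt_mul_rpow_mul {A B s h : ℝ} (hB : B ≠ 0) (hh : h ≠ 0) :
    HasDerivAt (fun y => A * (B * y) ^ s) (s * h⁻¹ * (A * (B * h) ^ s)) h := by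
  have hBh : B * h ≠ 0 := mul_ne_zero hB hh
  refine (((Real.hasDerivAt_rpow_const (Or.inl hBh)).comp h
    ((hasDerivAt_id h).const_mul B)).const_mul A).congr_deriv ?_
  rw [Real.rpow_sub_one hBh]
  field_simp

theorem deriv_one_div_mul_le {k : ℝ → ℝ} {k' p μ h : ℝ} (hp : 0 < p) (hh : 0 < h)
    (hk : HasDerivAt k k' h) (hk' : k' ≤ μ * h⁻¹ * k h) :
    deriv (fun y => 1 / (p * y) * k y) h ≤ (μ - 1) * h⁻¹ * (1 / (p * h) * k h) := by
  have hinv : HasDerivAt (fun y => 1 / (p * y)) (-(1 / (p * h ^ 2))) h := by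
    simp only [one_div]
    exact (((hasDerivAt_id' h).const_mul p).inv (by positivity)).congr_deriv (by field_simp)
  rw [(hinv.fun_mul hk).deriv]
  calc -(1 / (p * h ^ 2)) * k h + 1 / (p * h) * k'
      ≤ -(1 / (p * h ^ 2)) * k h + 1 / (p * h) * (μ * h⁻¹ * k h) := by gcongr
    _ = (μ - 1) * h⁻¹ * (1 / (p * h) * k h) := by field_simp; ring

theorem deriv_one_div_mul_comp_rpow_le {G G' : ℝ → ℝ} {κ p A B h : ℝ} (hp : 0 < p)
    (hB : B ≠ 0) (hh : 0 < h) (hG : ∀ t, HasDerivAt G (G' t) t)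
    (hGle : ∀ t, t * G' t ≤ κ * G t) :
    deriv (fun y => 1 / (p * y) * G (A * (B * y) ^ ((1:ℝ) / p))) h ≤
      (κ / p - 1) * h⁻¹ * (1 / (p * h) * G (A * (B * h) ^ ((1:ℝ) / p))) := by
  set u : ℝ → ℝ := fun y => A * (B * y) ^ ((1:ℝ) / p)
  refine deriv_one_div_mul_le hp hh ((hG (u h)).comp h (hasDerivAt_mul_rpow_mul hB hh.ne')) ?_
  calc G' (u h) * (1 / p * h⁻¹ * u h) = 1 / p * h⁻¹ * (u h * G' (u h)) := by ring
    _ ≤ 1 / p * h⁻¹ * (κ * G (u h)) := mul_le_mul_of_nonneg_left (hGle _) (by positivity)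
    _ = κ / p * h⁻¹ * G (u h) := by ring

theorem mul_inv_mul_le_mul_rpow {r c F s h : ℝ} (hr : r ≤ 0) (hh : 0 < h)
    (hF : c * h ^ (-1 + s) ≤ F) : r * h⁻¹ * F ≤ r * c * h ^ (-2 + s) :=
  calc r * h⁻¹ * F ≤ r * h⁻¹ * (c * h ^ (-1 + s)) :=
        mul_le_mul_of_nonpos_left hF (mul_nonpos_of_nonpos_of_nonneg hr (inv_pos.2 hh).le)
    _ = r * c * (h ^ (-1 : ℝ) * h ^ (-1 + s)) := by rw [Real.rpow_neg_one]; ring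
    _ = r * c * h ^ (-2 + s) := by rw [← Real.rpow_add hh]; ring_nf

theorem two_mul_pi_mul_rpow_div_mul_sin_pos {p : ℝ} (hp : 1 < p) :
    0 < 2 * Real.pi * (p - 1) ^ ((1:ℝ) / p) / (p * Real.sin (Real.pi / p)) := by
  have hp0 : 0 < p := by linarith
  have : 0 < Real.sin (Real.pi / p) :=
    Real.sin_pos_of_pos_of_lt_pi (by positivity) (div_lt_self Real.pi_pos hp)
  have : 0 < (p - 1) ^ ((1:ℝ) / p) := Real.rpow_pos_of_pos (by linarith) _
  positivity

namespace Real.HolderConjugate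

variable {p q : ℝ}

theorem one_add_div_div_sub_one (hpq : p.HolderConjugate q) (β₁ β₂ : ℝ) :
    (1 + β₂ / β₁) / p - 1 = β₂ / (p * β₁) - 1 / q := by
  rw [one_div q, ← hpq.one_sub_inv, add_div, div_div, mul_comm β₁]
  ring

theorem pos_of_mul_lt_mul (hpq : p.HolderConjugate q) {β₁ β₂ : ℝ} (hβ₂ : 0 < β₂)
    (hβ : q * β₂ < p * β₁) : 0 < β₁ :=
  pos_of_mul_pos_right (hβ.trans' (mul_pos hpq.symm.pos hβ₂)) hpq.nonneg

theorem div_mul_sub_one_div_neg (hpq : p.HolderConjugate q) {β₁ β₂ : ℝ} (hβ₂ : 0 < β₂)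
    (hβ : q * β₂ < p * β₁) : β₂ / (p * β₁) - 1 / q < 0 := by
  rw [sub_neg, div_lt_div_iff₀ (mul_pos hpq.pos (hpq.pos_of_mul_lt_mul hβ₂ hβ)) hpq.symm.pos]
  linarith

end Real.HolderConjugate

theorem stmt_11_general (p q γ d ω β₁ β₂ c c₃ πp h₁ : ℝ) (hp : 2 ≤ p)
    (hq : 1/p + 1/q = 1) (hγ0 : 0 < γ)
    (hω : 0 < ω) (hβ₂ : 0 < β₂) (hβ : q * β₂ < p * β₁)
    (hc₃ : 0 < c₃)
    (hπp : πp = 2 * Real.pi * (p - 1) ^ ((1:ℝ)/p) / (p * Real.sin (Real.pi / p)))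
    (f : ℝ → ℝ) (hfC : Continuous f) (hfC6 : ContDiffOn ℝ 6 f {(0:ℝ)}ᶜ)
    (hfb : ∀ x : ℝ, x ≠ 0 → ∀ k : ℕ, k ≤ 6 →
      |x ^ k * iteratedDeriv k f x| ≤ c * |x| ^ γ)
    (hfl : ∀ x : ℝ, x ≠ 0 → β₁ * |x| ^ (γ + 1) ≤ x * f x)
    (hfu : ∀ x : ℝ, x ≠ 0 → x ^ 2 * deriv f x ≤ β₂ * |x| ^ (γ + 1))
    (v : ℝ → ℝ) (hv : ContDiff ℝ 1 v)
    (Fbar : ℝ → ℝ)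
    (hF' : ∀ h ≥ h₁, deriv Fbar h = (1 / (p * h)) * ∫ θ in (0:ℝ)..(2 * πp),
      (d ^ ((1:ℝ)/p) * (ω⁻¹ * h) ^ ((1:ℝ)/p) * v θ) *
        f (d ^ ((1:ℝ)/p) * (ω⁻¹ * h) ^ ((1:ℝ)/p) * v θ))
    (hFlow : ∀ h ≥ h₁, c₃ * h ^ (-1 + (γ + 1) / p) ≤ deriv Fbar h) :
    ∃ h₀ cc : ℝ, 0 < cc ∧ ∀ h ≥ h₀,
      deriv (deriv Fbar) h ≤ (β₂ / (p * β₁) - 1/q) * h⁻¹ * deriv Fbar h ∧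
      deriv (deriv Fbar) h ≤ -cc * h ^ (-2 + (γ + 1) / p) := by
  have hpq : p.HolderConjugate q :=
    Real.holderConjugate_iff.2 ⟨by linarith, by simpa only [one_div] using hq⟩
  have hβ₁ : 0 < β₁ := hpq.pos_of_mul_lt_mul hβ₂ hβ
  have hπp0 : 0 < πp := hπp ▸ two_mul_pi_mul_rpow_div_mul_sin_pos hpq.lt
  have hΦ : ∀ x, HasDerivAt (fun y => y * f y) (f x + x * deriv f x) x :=
    hasDerivAt_id_mul hfC fun x hx => (hfC6.differentiableOn (by norm_num)).differentiableAt
      (isOpen_compl_singleton.mem_nhds hx)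
  have hΦ' : Continuous fun x => f x + x * deriv f x :=
    continuous_add_id_mul_deriv hfC (hfC6.continuousOn_deriv_of_isOpen isOpen_compl_singleton
      (by norm_num)) (tendsto_nhdsNE_zero_of_abs_le_rpow hγ0 fun x hx => by
        simpa using hfb x hx 1 (by norm_num))
  have hr := hpq.div_mul_sub_one_div_neg hβ₂ hβ
  refine ⟨max (h₁ + 1) 1, -(β₂ / (p * β₁) - 1 / q) * c₃, by nlinarith, fun h hh => ?_⟩
  have hh₁ : h₁ < h := by linarith [le_max_left (h₁ + 1) 1]
  have hh0 : 0 < h := by linarith [le_max_right (h₁ + 1) 1]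
  have hF'' : deriv (deriv Fbar) h ≤ (β₂ / (p * β₁) - 1 / q) * h⁻¹ * deriv Fbar h := by
    rw [EventuallyEq.deriv_eq ((eventually_gt_nhds hh₁).mono fun y hy => hF' y hy.le),
      hF' h hh₁.le, ← hpq.one_add_div_div_sub_one]
    exact deriv_one_div_mul_comp_rpow_le hpq.pos (inv_ne_zero hω.ne') hh0
      (hasDerivAt_intervalIntegral_comp_mul hΦ hΦ' hv.continuous _ _)
      (mul_integral_comp_mul_le (by linarith) (by fun_prop) hΦ' hv.continuous
        (mul_add_mul_deriv_le hβ₁ hβ₂.le hfl hfu))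
  exact ⟨hF'', hF''.trans ((mul_inv_mul_le_mul_rpow hr.le hh0 (hFlow h hh₁.le)).trans_eq
    (by ring))⟩

/-- concavity estimate for `F̄`. -/
theorem stmt_11 (p q γ d ω β₁ β₂ c c₃ πp h₁ : ℝ) (hp : 2 ≤ p)
    (hq : 1/p + 1/q = 1) (hγ0 : 0 < γ) (hγ1 : γ < 1 / (p - 1))
    (hd : 0 < d) (hω : 0 < ω) (hβ₂ : 0 < β₂) (hβ : q * β₂ < p * β₁)
    (hc : 0 < c) (hc₃ : 0 < c₃)
    (hπp : πp = 2 * Real.pi * (p - 1) ^ ((1:ℝ)/p) / (p * Real.sin (Real.pi / p)))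
    (f : ℝ → ℝ) (hfC : Continuous f) (hfC6 : ContDiffOn ℝ 6 f {(0:ℝ)}ᶜ)
    (hfb : ∀ x : ℝ, x ≠ 0 → ∀ k : ℕ, k ≤ 6 →
      |x ^ k * iteratedDeriv k f x| ≤ c * |x| ^ γ)
    (hfl : ∀ x : ℝ, x ≠ 0 → β₁ * |x| ^ (γ + 1) ≤ x * f x)
    (hfu : ∀ x : ℝ, x ≠ 0 → x ^ 2 * deriv f x ≤ β₂ * |x| ^ (γ + 1))
    (v : ℝ → ℝ) (hv : ContDiff ℝ 1 v) (M : ℝ) (hvb : ∀ θ : ℝ, |v θ| ≤ M)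
    (hvz : Set.Finite {θ ∈ Set.Icc (0:ℝ) (2 * πp) | v θ = 0})
    (hvpos : 0 < ∫ θ in (0:ℝ)..(2 * πp), |v θ| ^ (γ + 1))
    (Fbar : ℝ → ℝ)
    (hFbar : ∀ h : ℝ, Fbar h = ∫ θ in (0:ℝ)..(2 * πp),
      ∫ s in (0:ℝ)..(d ^ ((1:ℝ)/p) * (ω⁻¹ * h) ^ ((1:ℝ)/p) * v θ), f s)
    (hF' : ∀ h ≥ h₁, deriv Fbar h = (1 / (p * h)) * ∫ θ in (0:ℝ)..(2 * πp),
      (d ^ ((1:ℝ)/p) * (ω⁻¹ * h) ^ ((1:ℝ)/p) * v θ) *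
        f (d ^ ((1:ℝ)/p) * (ω⁻¹ * h) ^ ((1:ℝ)/p) * v θ))
    (hFlow : ∀ h ≥ h₁, c₃ * h ^ (-1 + (γ + 1) / p) ≤ deriv Fbar h) :
    ∃ h₀ cc : ℝ, 0 < cc ∧ ∀ h ≥ h₀,
      deriv (deriv Fbar) h ≤ (β₂ / (p * β₁) - 1/q) * h⁻¹ * deriv Fbar h ∧
      deriv (deriv Fbar) h ≤ -cc * h ^ (-2 + (γ + 1) / p) :=
  stmt_11_general p q γ d ω β₁ β₂ c c₃ πp h₁ hp hq hγ0 hω hβ₂ hβ hc₃ hπp f hfC hfC6 hfb hfl hfu v hv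
    Fbar hF' hFlow
end

section
/- Suppose h : [1,4] → ℝ is implicitly defined by F̄'(h(λ)) = ω^p δ λ where F̄ is C⁵ and satisfies |F̄^{(k)}(h)| ≤ C h^{-k+(γ+1)/p} for 2 ≤ k ≤ 5 and F̄''(h) ≤ −c h^{-2+(γ+1)/p} for large h (c, C > 0). Then |∂_λ^k h(λ)| ≤ C' h(λ) for 0 ≤ k ≤ 4 and δ small, with C' independent of δ. -/
/-!
Differentiating `F̄'(h(λ)) = ω^p δ λ` up to four times expresses `F̄''(h) h⁽ʲ⁾` through
`F̄⁽ᵏ⁾(h)`, `k ≤ 5`, and the lower derivatives of `h` (Faà di Bruno). After the rescaling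
`F̄⁽ᵏ⁾(h) ↦ h^(k - (γ+1)/p) F̄⁽ᵏ⁾(h)`, `h⁽ʲ⁾ ↦ h⁽ʲ⁾ / h` all coefficients are bounded by `C`, the
leading one stays `≤ -c`, and the right-hand side `ω^p δ h^(1 - (γ+1)/p)` is at most `c₄`, so the
`h⁽ʲ⁾ / h` are bounded one after the other. Smallness of `δ` keeps `h(λ)` in the open region where
`F̄` is `C⁵`; at the endpoints of `[1, 4]` the derivatives of `h` are the one-sided ones.
-/

open Set Filter Topology

section IteratedDeriv

variable {𝕜 : Type*} [NontriviallyNormedField 𝕜] {E : Type*} [NormedAddCommGroup E]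
  [NormedSpace 𝕜 E] {f : 𝕜 → E} {s : Set 𝕜} {n : WithTop ℕ∞} {k : ℕ} {x : 𝕜}

theorem ContDiffOn.hasDerivWithinAt_iteratedDerivWithin (hf : ContDiffOn 𝕜 n f s)
    (hs : UniqueDiffOn 𝕜 s) (hk : k < n) (hx : x ∈ s) :
    HasDerivWithinAt (iteratedDerivWithin k f s) (iteratedDerivWithin (k + 1) f s x) s x := by
  rw [iteratedDerivWithin_succ]
  exact ((hf.differentiableOn_iteratedDerivWithin hk hs) x hx).hasDerivWithinAt

theorem ContDiffOn.hasDerivAt_iteratedDeriv (hf : ContDiffOn 𝕜 n f s) (hs : IsOpen s)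
    (hk : k < n) (hx : x ∈ s) :
    HasDerivAt (iteratedDeriv k f) (iteratedDeriv (k + 1) f x) x := by
  have hW := (hf.hasDerivWithinAt_iteratedDerivWithin hs.uniqueDiffOn hk hx).hasDerivAt
    (hs.mem_nhds hx)
  rw [iteratedDerivWithin_of_isOpen hs hx] at hW
  exact hW.congr_of_eventuallyEq <|
    eventually_of_mem (hs.mem_nhds hx) fun _ hy => (iteratedDerivWithin_of_isOpen hs hy).symm

theorem HasDerivWithinAt.eq_of_eqOn_affine {φ : 𝕜 → 𝕜} {φ' m b : 𝕜}
    (hφ : HasDerivWithinAt φ φ' s x) (hs : UniqueDiffWithinAt 𝕜 s x) (hx : x ∈ s)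
    (h : ∀ t ∈ s, φ t = m * t + b) : φ' = m :=
  hs.eq_deriv s (hφ.congr_of_mem (fun t ht => (h t ht).symm) hx)
    ((((hasDerivAt_id x).const_mul m).add_const b).hasDerivWithinAt.congr_deriv (mul_one m))

end IteratedDeriv

section Icc

variable {f : ℝ → ℝ} {a b : ℝ} {n : WithTop ℕ∞} {k : ℕ} {x : ℝ}

theorem iteratedDerivWithin_Icc_eqOn_Ioo (hf : ContDiffOn ℝ n f (Icc a b)) (hk : k ≤ n) :
    EqOn (iteratedDerivWithin k f (Icc a b)) (iteratedDeriv k f) (Ioo a b) := fun _ hy =>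
  iteratedDerivWithin_eq_iteratedDeriv (uniqueDiffOn_Icc (hy.1.trans hy.2))
    ((hf.contDiffAt (Icc_mem_nhds hy.1 hy.2)).of_le hk) (Ioo_subset_Icc_self hy)

/-- Even at an endpoint, differentiability of `iteratedDeriv k f` lets its derivative be computed
from inside `Ioo a b`, where `iteratedDeriv k f` coincides with the one-sided derivative. -/
theorem iteratedDeriv_succ_eq_iteratedDerivWithin_Icc (hab : a < b)
    (hf : ContDiffOn ℝ n f (Icc a b)) (hk : k < n) (hx : x ∈ Icc a b)
    (hdiff : DifferentiableAt ℝ (iteratedDeriv k f) x) :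
    iteratedDeriv (k + 1) f x = iteratedDerivWithin (k + 1) f (Icc a b) x := by
  have hEq := iteratedDerivWithin_Icc_eqOn_Ioo hf hk.le
  have hx' : x ∈ closure (Ioo a b) := by rwa [closure_Ioo hab.ne]
  have hW := hf.hasDerivWithinAt_iteratedDerivWithin (uniqueDiffOn_Icc hab) hk hx
  have hat : iteratedDerivWithin k f (Icc a b) x = iteratedDeriv k f x := by
    have := mem_closure_iff_nhdsWithin_neBot.1 hx'
    exact tendsto_nhds_unique_of_eventuallyEq
      (hW.continuousWithinAt.mono Ioo_subset_Icc_self) hdiff.continuousAt.continuousWithinAt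
      (eventually_mem_nhdsWithin.mono hEq)
  rw [iteratedDeriv_succ]
  exact (uniqueDiffWithinAt_convex (convex_Ioo a b) (by simp [hab]) hx').eq_deriv _
    (hdiff.hasDerivAt.hasDerivWithinAt.congr hEq hat) (hW.mono Ioo_subset_Icc_self)

theorem abs_iteratedDeriv_le_abs_iteratedDerivWithin_Icc (hab : a < b)
    (hf : ContDiffOn ℝ n f (Icc a b)) (hk : k ≤ n) (hx : x ∈ Icc a b) :
    |iteratedDeriv k f x| ≤ |iteratedDerivWithin k f (Icc a b) x| := by
  rcases k with _ | k
  · simp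
  by_cases hdiff : DifferentiableAt ℝ (iteratedDeriv k f) x
  · rw [iteratedDeriv_succ_eq_iteratedDerivWithin_Icc hab hf
      (lt_of_lt_of_le (by exact_mod_cast k.lt_succ_self) hk) hx hdiff]
  · rw [iteratedDeriv_succ, deriv_zero_of_not_differentiableAt hdiff, abs_zero]
    exact abs_nonneg _

end Icc

theorem Real.rpow_neg_natCast_add {a : ℝ} (ha : 0 < a) (k : ℕ) (E : ℝ) :
    a ^ (-(k : ℝ) + E) = a ^ E / a ^ k := by
  rw [Real.rpow_add ha, Real.rpow_neg ha.le, Real.rpow_natCast, inv_mul_eq_div]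

theorem abs_le_div_of_le_abs_mul {c a x M : ℝ} (hc : 0 < c) (ha : c ≤ |a|) (h : |a * x| ≤ M) :
    |x| ≤ M / c := by
  rw [le_div_iff₀ hc, mul_comm]
  calc c * |x| ≤ |a| * |x| := by gcongr
    _ = |a * x| := (abs_mul a x).symm
    _ ≤ M := h

/-- With `A k = F⁽ᵏ⁾(g λ)` and `b j = g⁽ʲ⁾(λ)`, these are the identities obtained by
differentiating `F'(g λ) = μ λ` once to four times. -/
def FaaDiBrunoRelations (A b : ℕ → ℝ) (μ : ℝ) : Prop :=
  A 2 * b 1 = μ ∧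
  A 3 * b 1 ^ 2 + A 2 * b 2 = 0 ∧
  A 4 * b 1 ^ 3 + 3 * A 3 * b 1 * b 2 + A 2 * b 3 = 0 ∧
  A 5 * b 1 ^ 4 + 6 * A 4 * b 1 ^ 2 * b 2 + 3 * A 3 * b 2 ^ 2 + 4 * A 3 * b 1 * b 3
    + A 2 * b 4 = 0

theorem faaDiBrunoRelations_of_hasDerivWithinAt {s : Set ℝ} (hs : UniqueDiffOn ℝ s)
    {G d : ℕ → ℝ → ℝ} {μ : ℝ}
    (hG : ∀ k, 1 ≤ k → k ≤ 4 → ∀ x ∈ s, HasDerivWithinAt (G k) (G (k + 1) x * d 1 x) s x)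
    (hd : ∀ j, 1 ≤ j → j ≤ 3 → ∀ x ∈ s, HasDerivWithinAt (d j) (d (j + 1) x) s x)
    (hG₁ : ∀ x ∈ s, G 1 x = μ * x) {x : ℝ} (hx : x ∈ s) :
    FaaDiBrunoRelations (G · x) (d · x) μ := by
  have hG₂ := hG 2 (by norm_num) (by norm_num)
  have hG₃ := hG 3 (by norm_num) (by norm_num)
  have hG₄ := hG 4 (by norm_num) (by norm_num)
  have hd₁ := hd 1 le_rfl (by norm_num)
  have hd₂ := hd 2 (by norm_num) (by norm_num)
  have hd₃ := hd 3 (by norm_num) le_rfl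
  have R₁ : ∀ x ∈ s, G 2 x * d 1 x = μ := fun x hx =>
    (hG 1 le_rfl (by norm_num) x hx).eq_of_eqOn_affine (hs x hx) hx
      fun t ht => by rw [hG₁ t ht, add_zero]
  have R₂ : ∀ x ∈ s, G 3 x * d 1 x ^ 2 + G 2 x * d 2 x = 0 := fun x hx => by
    have := ((hG₂ x hx).mul (hd₁ x hx)).eq_of_eqOn_affine (hs x hx) hx (m := 0) (b := μ)
      fun t ht => by rw [Pi.mul_apply, R₁ t ht, zero_mul, zero_add]
    linear_combination this
  have R₃ : ∀ x ∈ s, G 4 x * d 1 x ^ 3 + 3 * G 3 x * d 1 x * d 2 x + G 2 x * d 3 x = 0 :=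
      fun x hx => by
    have := (((hG₃ x hx).mul ((hd₁ x hx).pow 2)).add
      ((hG₂ x hx).mul (hd₂ x hx))).eq_of_eqOn_affine (hs x hx) hx (m := 0) (b := 0)
      fun t ht => by
        simp only [Pi.add_apply, Pi.mul_apply, Pi.pow_apply]; linear_combination R₂ t ht
    simp only [Pi.pow_apply] at this
    linear_combination this
  have R₄ : ∀ x ∈ s, G 5 x * d 1 x ^ 4 + 6 * G 4 x * d 1 x ^ 2 * d 2 x + 3 * G 3 x * d 2 x ^ 2
      + 4 * G 3 x * d 1 x * d 3 x + G 2 x * d 4 x = 0 := fun x hx => by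
    have := ((((hG₄ x hx).mul ((hd₁ x hx).pow 3)).add
      ((((hG₃ x hx).mul (hd₁ x hx)).mul (hd₂ x hx)).const_mul 3)).add
      ((hG₂ x hx).mul (hd₃ x hx))).eq_of_eqOn_affine (hs x hx) hx (m := 0) (b := 0)
      fun t ht => by
        simp only [Pi.add_apply, Pi.mul_apply, Pi.pow_apply]; linear_combination R₃ t ht
    simp only [Pi.mul_apply, Pi.pow_apply] at this
    linear_combination this
  exact ⟨R₁ x hx, R₂ x hx, R₃ x hx, R₄ x hx⟩

theorem faaDiBrunoRelations_iteratedDeriv_comp {F g : ℝ → ℝ} {U s : Set ℝ} {μ : ℝ}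
    (hF : ContDiffOn ℝ 5 F U) (hU : IsOpen U) (hg : ContDiffOn ℝ 4 g s)
    (hs : UniqueDiffOn ℝ s) (hgU : MapsTo g s U) (hFg : ∀ t ∈ s, deriv F (g t) = μ * t)
    {x : ℝ} (hx : x ∈ s) :
    FaaDiBrunoRelations (fun k => iteratedDeriv k F (g x))
      (fun j => iteratedDerivWithin j g s x) μ := by
  refine faaDiBrunoRelations_of_hasDerivWithinAt hs (G := fun k t => iteratedDeriv k F (g t))
    (fun k _ hk t ht => ?_) (fun j _ hj t ht => ?_) (fun t ht => by simpa using hFg t ht) hx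
  · have hg' := hg.hasDerivWithinAt_iteratedDerivWithin hs (k := 0) (by norm_num) ht
    rw [iteratedDerivWithin_zero] at hg'
    exact (hF.hasDerivAt_iteratedDeriv hU (by norm_cast; omega) (hgU ht)).comp_hasDerivWithinAt
      t hg'
  · exact hg.hasDerivWithinAt_iteratedDerivWithin hs (by norm_cast; omega) ht

theorem FaaDiBrunoRelations.rescale {A b : ℕ → ℝ} {μ : ℝ} (h : FaaDiBrunoRelations A b μ)
    (s : ℝ) {t : ℝ} (ht : t ≠ 0) :
    FaaDiBrunoRelations (fun k => s * t ^ k * A k) (fun j => b j / t) (s * t * μ) := by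
  obtain ⟨h₁, h₂, h₃, h₄⟩ := h
  refine ⟨?_, ?_, ?_, ?_⟩ <;> field_simp
  · linear_combination s * h₁
  · linear_combination s * t * h₂
  · linear_combination s * t * h₃
  · linear_combination s * t * h₄

theorem FaaDiBrunoRelations.exists_abs_le {c : ℝ} (C c₄ : ℝ) (hc : 0 < c) :
    ∃ K, ∀ (α β : ℕ → ℝ) (ν : ℝ), FaaDiBrunoRelations α β ν → c ≤ |α 2| →
      (∀ k : ℕ, 3 ≤ k → k ≤ 5 → |α k| ≤ C) → |ν| ≤ c₄ →
      ∀ j : ℕ, 1 ≤ j → j ≤ 4 → |β j| ≤ K := by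
  set K₁ := c₄ / c
  set K₂ := C * K₁ ^ 2 / c
  set K₃ := (C * K₁ ^ 3 + 3 * C * K₁ * K₂) / c
  set K₄ := (C * K₁ ^ 4 + 6 * C * K₁ ^ 2 * K₂ + 3 * C * K₂ ^ 2 + 4 * C * K₁ * K₃) / c
  refine ⟨K₁ + K₂ + K₃ + K₄, fun α β ν ⟨h₁, h₂, h₃, h₄⟩ hα₂ hα hν j hj₁ hj₄ => ?_⟩
  have hα₃ := hα 3 (by norm_num) (by norm_num)
  have hα₄ := hα 4 (by norm_num) (by norm_num)
  have hα₅ := hα 5 (by norm_num) (by norm_num)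
  have hC : 0 ≤ C := (abs_nonneg _).trans hα₃
  have hβ₁ : |β 1| ≤ K₁ := abs_le_div_of_le_abs_mul hc hα₂ (by rwa [h₁])
  have hK₁ : 0 ≤ K₁ := (abs_nonneg _).trans hβ₁
  have hβ₂ : |β 2| ≤ K₂ := abs_le_div_of_le_abs_mul hc hα₂ <| by
    rw [show α 2 * β 2 = -(α 3 * β 1 ^ 2) by linear_combination h₂, abs_neg, abs_mul, abs_pow]
    gcongr
  have hK₂ : 0 ≤ K₂ := (abs_nonneg _).trans hβ₂
  have hβ₃ : |β 3| ≤ K₃ := abs_le_div_of_le_abs_mul hc hα₂ <| by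
    rw [show α 2 * β 3 = -(α 4 * β 1 ^ 3 + 3 * α 3 * β 1 * β 2) by linear_combination h₃,
      abs_neg]
    refine (abs_add_le _ _).trans ?_
    simp only [abs_mul, abs_pow, abs_of_pos (by norm_num : (0:ℝ) < 3)]
    gcongr
  have hK₃ : 0 ≤ K₃ := (abs_nonneg _).trans hβ₃
  have hβ₄ : |β 4| ≤ K₄ := abs_le_div_of_le_abs_mul hc hα₂ <| by
    rw [show α 2 * β 4 = -(α 5 * β 1 ^ 4 + 6 * α 4 * β 1 ^ 2 * β 2 + 3 * α 3 * β 2 ^ 2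
      + 4 * α 3 * β 1 * β 3) by linear_combination h₄, abs_neg]
    refine (abs_add_le _ _).trans ((add_le_add_left (abs_add_three _ _ _) _).trans ?_)
    simp only [abs_mul, abs_pow, abs_of_pos (by norm_num : (0:ℝ) < 3),
      abs_of_pos (by norm_num : (0:ℝ) < 4), abs_of_pos (by norm_num : (0:ℝ) < 6)]
    gcongr
  interval_cases j <;> linarith [abs_nonneg (β 4)]

theorem FaaDiBrunoRelations.exists_abs_le_mul {c : ℝ} (C c₄ E : ℝ) (hc : 0 < c) :
    ∃ K, ∀ (A b : ℕ → ℝ) (μ a : ℝ), 0 < a → FaaDiBrunoRelations A b μ →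
      A 2 ≤ -c * a ^ (-2 + E) → (∀ k : ℕ, 3 ≤ k → k ≤ 5 → |A k| ≤ C * a ^ (-(k : ℝ) + E)) →
      0 ≤ μ → μ ≤ c₄ * a ^ (-1 + E) → ∀ j : ℕ, 1 ≤ j → j ≤ 4 → |b j| ≤ K * a := by
  obtain ⟨K, hK⟩ := exists_abs_le C c₄ hc
  refine ⟨K, fun A b μ a ha hrel hA₂ hA hμ₀ hμ j hj₁ hj₄ => ?_⟩
  have haE : 0 < a ^ E := Real.rpow_pos_of_pos ha E
  have hpow₁ : a ^ (-1 + E) = a ^ E / a := by simpa using Real.rpow_neg_natCast_add ha 1 E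
  have hpow₂ : a ^ (-2 + E) = a ^ E / a ^ 2 := by simpa using Real.rpow_neg_natCast_add ha 2 E
  have hβ := hK _ _ _ (hrel.rescale (a ^ E)⁻¹ ha.ne') ?_ ?_ ?_ j hj₁ hj₄
  · rwa [abs_div, abs_of_pos ha, div_le_iff₀ ha] at hβ
  · rw [hpow₂] at hA₂
    refine le_trans ?_ (neg_le_abs _)
    calc c = -((a ^ E)⁻¹ * a ^ 2 * (-c * (a ^ E / a ^ 2))) := by field_simp
      _ ≤ _ := by gcongr
  · intro k hk₃ hk₅
    rw [abs_mul, abs_of_pos (by positivity)]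
    calc (a ^ E)⁻¹ * a ^ k * |A k| ≤ (a ^ E)⁻¹ * a ^ k * (C * (a ^ E / a ^ k)) := by
          gcongr
          rw [← Real.rpow_neg_natCast_add ha]
          exact hA k hk₃ hk₅
      _ = C := by field_simp
  · rw [hpow₁] at hμ
    rw [abs_of_nonneg (by positivity)]
    calc (a ^ E)⁻¹ * a * μ ≤ (a ^ E)⁻¹ * a * (c₄ * (a ^ E / a)) := by gcongr
      _ = c₄ := by field_simp

theorem stmt_13_general (p γ ω c C c₃ c₄ h₀ δ₁ : ℝ) (hω : 0 < ω) (hc : 0 < c)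
    (hc₃ : 0 < c₃) (hδ₁ : 0 < δ₁) (hh₀ : 0 < h₀)
    (Fbar : ℝ → ℝ) (hF : ContDiffOn ℝ 5 Fbar (Set.Ioi h₀))
    (hup : ∀ x ≥ h₀, ∀ k : ℕ, 2 ≤ k → k ≤ 5 →
      |iteratedDeriv k Fbar x| ≤ C * x ^ (-(k:ℝ) + (γ + 1) / p))
    (hdown : ∀ x ≥ h₀, iteratedDeriv 2 Fbar x ≤ -c * x ^ (-2 + (γ + 1) / p))
    (hfirst : ∀ x ≥ h₀, c₃ * x ^ (-1 + (γ + 1) / p) ≤ deriv Fbar x ∧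
      deriv Fbar x ≤ c₄ * x ^ (-1 + (γ + 1) / p))
    (h : ℝ → ℝ → ℝ)
    (hsm : ∀ δ : ℝ, 0 < δ → δ < δ₁ → ContDiffOn ℝ 4 (h δ) (Set.Icc 1 4))
    (hdef : ∀ δ : ℝ, 0 < δ → δ < δ₁ → ∀ lam ∈ Set.Icc (1:ℝ) 4,
      deriv Fbar (h δ lam) = ω ^ p * δ * lam ∧ h₀ ≤ h δ lam) :
    ∃ C' δ₀ : ℝ, 0 < C' ∧ 0 < δ₀ ∧ δ₀ ≤ δ₁ ∧
      ∀ δ : ℝ, 0 < δ → δ < δ₀ → ∀ lam ∈ Set.Icc (1:ℝ) 4, ∀ k : ℕ, k ≤ 4 →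
        |iteratedDeriv k (h δ) lam| ≤ C' * h δ lam := by
  set E := (γ + 1) / p
  obtain ⟨K, hK⟩ := FaaDiBrunoRelations.exists_abs_le_mul C c₄ E hc
  have hωp : 0 < ω ^ p := Real.rpow_pos_of_pos hω p
  refine ⟨max 1 K, min δ₁ (c₃ * h₀ ^ (-1 + E) / (4 * ω ^ p)), by positivity, by positivity,
    min_le_left _ _, fun δ hδ hδ₀ lam hlam k hk => ?_⟩
  have hδδ₁ : δ < δ₁ := hδ₀.trans_le (min_le_left _ _)
  have hFh := hdef δ hδ hδδ₁
  -- `h δ` cannot reach `h₀`, where `F̄'` is already larger than `4 ω ^ p δ`.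
  have hgt : ∀ t ∈ Icc (1:ℝ) 4, h₀ < h δ t := fun t ht => by
    refine (hFh t ht).2.lt_of_ne fun heq => ?_
    have hval := (hFh t ht).1
    rw [← heq] at hval
    have hlow := (hfirst h₀ le_rfl).1
    have hsmall : δ * (4 * ω ^ p) < c₃ * h₀ ^ (-1 + E) :=
      (lt_div_iff₀ (by positivity)).1 (hδ₀.trans_le (min_le_right _ _))
    nlinarith [mul_le_mul_of_nonneg_left ht.2 (mul_pos hωp hδ).le]
  have ha : 0 < h δ lam := hh₀.trans (hgt lam hlam)
  have hah : h δ lam ≥ h₀ := (hFh lam hlam).2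
  have hrel := faaDiBrunoRelations_iteratedDeriv_comp hF isOpen_Ioi (hsm δ hδ hδδ₁)
    (uniqueDiffOn_Icc (by norm_num)) (fun t ht => hgt t ht) (fun t ht => (hFh t ht).1) hlam
  have hμ : ω ^ p * δ ≤ c₄ * h δ lam ^ (-1 + E) :=
    calc ω ^ p * δ ≤ ω ^ p * δ * lam := le_mul_of_one_le_right (by positivity) hlam.1
      _ = deriv Fbar (h δ lam) := (hFh lam hlam).1.symm
      _ ≤ c₄ * h δ lam ^ (-1 + E) := (hfirst _ hah).2
  rcases Nat.eq_zero_or_pos k with rfl | hk₁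
  · simp [abs_of_pos ha, ha]
  calc |iteratedDeriv k (h δ) lam| ≤ |iteratedDerivWithin k (h δ) (Icc 1 4) lam| :=
        abs_iteratedDeriv_le_abs_iteratedDerivWithin_Icc (by norm_num) (hsm δ hδ hδδ₁)
          (by exact_mod_cast hk) hlam
    _ ≤ K * h δ lam := hK _ _ _ _ ha hrel (hdown _ hah)
          (fun k hk₃ hk₅ => hup _ hah k (by omega) hk₅) (by positivity) hμ k hk₁ hk
    _ ≤ max 1 K * h δ lam := by gcongr; exact le_max_right _ _

/-- derivative bounds `|∂_λ^k h(λ)| ≤ C' h(λ)` for the implicitly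
defined frequency-action function. -/
theorem stmt_13 (p γ ω c C c₃ c₄ h₀ δ₁ : ℝ) (hp : 2 ≤ p) (hγ0 : 0 < γ)
    (hγ1 : γ < 1 / (p - 1)) (hω : 0 < ω) (hc : 0 < c) (hC : 0 < C)
    (hc₃ : 0 < c₃) (hc₄ : c₃ ≤ c₄) (hδ₁ : 0 < δ₁) (hh₀ : 0 < h₀)
    (Fbar : ℝ → ℝ) (hF : ContDiffOn ℝ 5 Fbar (Set.Ioi h₀))
    (hup : ∀ x ≥ h₀, ∀ k : ℕ, 2 ≤ k → k ≤ 5 →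
      |iteratedDeriv k Fbar x| ≤ C * x ^ (-(k:ℝ) + (γ + 1) / p))
    (hdown : ∀ x ≥ h₀, iteratedDeriv 2 Fbar x ≤ -c * x ^ (-2 + (γ + 1) / p))
    (hfirst : ∀ x ≥ h₀, c₃ * x ^ (-1 + (γ + 1) / p) ≤ deriv Fbar x ∧
      deriv Fbar x ≤ c₄ * x ^ (-1 + (γ + 1) / p))
    (h : ℝ → ℝ → ℝ)
    (hsm : ∀ δ : ℝ, 0 < δ → δ < δ₁ → ContDiffOn ℝ 4 (h δ) (Set.Icc 1 4))
    (hdef : ∀ δ : ℝ, 0 < δ → δ < δ₁ → ∀ lam ∈ Set.Icc (1:ℝ) 4,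
      deriv Fbar (h δ lam) = ω ^ p * δ * lam ∧ h₀ ≤ h δ lam) :
    ∃ C' δ₀ : ℝ, 0 < C' ∧ 0 < δ₀ ∧ δ₀ ≤ δ₁ ∧
      ∀ δ : ℝ, 0 < δ → δ < δ₀ → ∀ lam ∈ Set.Icc (1:ℝ) 4, ∀ k : ℕ, k ≤ 4 →
        |iteratedDeriv k (h δ) lam| ≤ C' * h δ lam :=
  stmt_13_general p γ ω c C c₃ c₄ h₀ δ₁ hω hc hc₃ hδ₁ hh₀ Fbar hF hup hdown hfirst h hsm hdef
end
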